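/- Quantitative distance lower bound after limited communication: let χ ≥ 3 be real, q ∈ ℕ, and s ∈ ℕ with s ≤ 12q/χ + 1. Then every x ∈ ℓ² with x_l = 0 for all l > s satisfies ‖x − x*‖² ≥ (ρ⁴/(1 − ρ²)) · ρ^{24q/χ}, and consequently ‖x − x*‖² ≥ (ρ⁴/(1 − ρ²)) · (max{0, 1 − √(6μ)/√L})^{24q/χ}. -/

import Mathlib

open scoped BigOperators

/-- The real Hilbert space `ℓ²` of square-summable sequences (indexed from `0`; the paper's
coordinate `l ≥ 1` corresponds to the index `l - 1`). -/
abbrev ell2 : Type := lp (fun _ : ℕ => ℝ) 2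

/-!
Since `x` vanishes from index `s` on, `‖x - x*‖²` is at least the geometric tail
`∑_{l > s} ρ^{2l} = ρ^{2s+2}/(1 - ρ²)`, and `s ≤ 12q/χ + 1` turns `ρ^{2s+2}` into
`ρ^{4 + 24q/χ}` because `ρ < 1`. For the second bound, with `t = √(2L/(3μ) + 1/3)` we have
`ρ = 1 - 2/(t + 1)` and `t · √(6μ/L) = √(4 + 2μ/L) ≥ 2`, so `1 - √(6μ)/√L ≤ ρ`.
-/

theorem lp.tsum_norm_sq_nat_add_le_norm_sq {E : Type*} [NormedAddCommGroup E]
    (z : lp (fun _ : ℕ => E) 2) (s : ℕ) : ∑' n, ‖z (n + s)‖ ^ 2 ≤ ‖z‖ ^ 2 := by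
  have hz : HasSum (fun l => ‖z l‖ ^ 2) (‖z‖ ^ 2) := by
    exact_mod_cast lp.hasSum_norm (p := 2) (by norm_num) z
  rw [← hz.tsum_eq]
  exact Summable.tsum_le_tsum_of_inj (· + s) (add_left_injective s)
    (fun _ _ => by positivity) (fun _ => le_rfl) ((summable_nat_add_iff s).2 hz.summable)
    hz.summable

theorem tsum_sq_pow_nat_add_succ {ρ : ℝ} (hρ : |ρ| < 1) (s : ℕ) :
    ∑' n : ℕ, (ρ ^ (n + s + 1)) ^ 2 = (ρ ^ 2) ^ (s + 1) / (1 - ρ ^ 2) := by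
  have hρ2 : ρ ^ 2 < 1 := by rwa [sq_lt_one_iff_abs_lt_one]
  calc ∑' n : ℕ, (ρ ^ (n + s + 1)) ^ 2 = ∑' n : ℕ, (ρ ^ 2) ^ (s + 1) * (ρ ^ 2) ^ n := by
        congr 1; ext n; ring
    _ = _ := by
      rw [tsum_mul_left, tsum_geometric_of_lt_one (by positivity) hρ2, div_eq_mul_inv]

theorem sq_pow_succ_div_le_norm_sub_sq {ρ : ℝ} (hρ : |ρ| < 1) (xs : ell2)
    (hxs : ∀ l : ℕ, xs l = ρ ^ (l + 1)) (s : ℕ) (x : ell2) (hx : ∀ l : ℕ, s ≤ l → x l = 0) :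
    (ρ ^ 2) ^ (s + 1) / (1 - ρ ^ 2) ≤ ‖x - xs‖ ^ 2 := by
  have htail (n : ℕ) : ‖(x - xs) (n + s)‖ ^ 2 = (ρ ^ (n + s + 1)) ^ 2 := by
    simp only [lp.coeFn_sub, Pi.sub_apply, hx (n + s) (Nat.le_add_left s n), hxs, zero_sub,
      norm_neg, Real.norm_eq_abs, sq_abs]
  rw [← tsum_sq_pow_nat_add_succ hρ s, ← tsum_congr htail]
  exact lp.tsum_norm_sq_nat_add_le_norm_sq (x - xs) s

theorem pow_four_div_mul_rpow_le_sq_pow_succ_div {ρ e : ℝ} (hρ0 : 0 < ρ) (hρ1 : ρ < 1) {s : ℕ}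
    (hs : (s : ℝ) ≤ e / 2 + 1) :
    ρ ^ 4 / (1 - ρ ^ 2) * ρ ^ e ≤ (ρ ^ 2) ^ (s + 1) / (1 - ρ ^ 2) := by
  have hexp : ρ ^ (4 + e) ≤ ρ ^ ((2 * (s + 1) : ℕ) : ℝ) :=
    Real.rpow_le_rpow_of_exponent_ge hρ0 hρ1.le (by push_cast; linarith)
  rw [Real.rpow_add hρ0, Real.rpow_natCast, pow_mul] at hexp
  rw [div_mul_eq_mul_div]
  gcongr
  · nlinarith
  · exact_mod_cast hexp

theorem sub_one_div_add_one_mem_Ioo {t : ℝ} (ht : 1 < t) :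
    0 < (t - 1) / (t + 1) ∧ (t - 1) / (t + 1) < 1 :=
  ⟨div_pos (by linarith) (by linarith), (div_lt_one (by linarith)).2 (by linarith)⟩

theorem one_sub_le_sub_one_div_add_one {t a : ℝ} (ht : 0 < t) (hta : 2 ≤ t * a) :
    1 - a ≤ (t - 1) / (t + 1) := by
  rw [le_div_iff₀ (by linarith)]
  nlinarith

theorem one_lt_sqrt_condition {μ L : ℝ} (hμ : 0 < μ) (hμL : μ < L) :
    1 < Real.sqrt (2 * L / (3 * μ) + 1 / 3) := by
  rw [Real.lt_sqrt zero_le_one, one_pow, ← sub_lt_iff_lt_add, lt_div_iff₀ (by positivity)]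
  linarith

theorem two_le_sqrt_condition_mul {μ L : ℝ} (hμ : 0 < μ) (hμL : μ < L) :
    2 ≤ Real.sqrt (2 * L / (3 * μ) + 1 / 3) * (Real.sqrt (6 * μ) / Real.sqrt L) := by
  have hL : 0 < L := hμ.trans hμL
  rw [← Real.sqrt_div (by positivity), ← Real.sqrt_mul (by positivity)]
  have : (2 * L / (3 * μ) + 1 / 3) * (6 * μ / L) = 2 ^ 2 + 2 * μ / L := by
    field_simp; ring
  rw [this]
  exact Real.le_sqrt_of_sq_le (by linarith [show 0 < 2 * μ / L by positivity])

/-- **Quantitative distance lower bound after limited communication.**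
Let `χ ≥ 3`, `q ∈ ℕ`, `s ∈ ℕ` with `s ≤ 12q/χ + 1`. Then every `x ∈ ℓ²` whose (paper)
coordinates `x_l` vanish for `l > s` satisfies
`‖x − x*‖² ≥ (ρ⁴/(1 − ρ²)) · ρ^{24q/χ}`, and consequently
`‖x − x*‖² ≥ (ρ⁴/(1 − ρ²)) · (max {0, 1 − √(6μ)/√L})^{24q/χ}`
(real exponents taken via the real power function). -/
theorem limited_communication_lower_bound (μ L : ℝ) (hμ : 0 < μ) (hμL : μ < L)
    (ρ : ℝ)
    (hρ : ρ = (Real.sqrt (2 * L / (3 * μ) + 1 / 3) - 1) /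
      (Real.sqrt (2 * L / (3 * μ) + 1 / 3) + 1))
    (xs : ell2) (hxs : ∀ l : ℕ, xs l = ρ ^ (l + 1))
    (χ : ℝ) (hχ : 3 ≤ χ) (q s : ℕ) (hs : (s : ℝ) ≤ 12 * (q : ℝ) / χ + 1)
    (x : ell2) (hx : ∀ l : ℕ, s ≤ l → x l = 0) :
    (ρ ^ 4 / (1 - ρ ^ 2)) * ρ ^ (24 * (q : ℝ) / χ) ≤ ‖x - xs‖ ^ 2 ∧
    (ρ ^ 4 / (1 - ρ ^ 2)) *
        (max 0 (1 - Real.sqrt (6 * μ) / Real.sqrt L)) ^ (24 * (q : ℝ) / χ) ≤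
      ‖x - xs‖ ^ 2 := by
  have ht := one_lt_sqrt_condition hμ hμL
  obtain ⟨hρ0, hρ1⟩ : 0 < ρ ∧ ρ < 1 := hρ ▸ sub_one_div_add_one_mem_Ioo ht
  have hρabs : |ρ| < 1 := by rwa [abs_of_pos hρ0]
  have hfirst : ρ ^ 4 / (1 - ρ ^ 2) * ρ ^ (24 * (q : ℝ) / χ) ≤ ‖x - xs‖ ^ 2 :=
    (pow_four_div_mul_rpow_le_sq_pow_succ_div hρ0 hρ1 (by convert hs using 2; ring)).trans
      (sq_pow_succ_div_le_norm_sub_sq hρabs xs hxs s x hx)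
  have hbase : max 0 (1 - Real.sqrt (6 * μ) / Real.sqrt L) ≤ ρ :=
    max_le hρ0.le (hρ ▸ one_sub_le_sub_one_div_add_one (by linarith)
      (two_le_sqrt_condition_mul hμ hμL))
  refine ⟨hfirst, le_trans ?_ hfirst⟩
  have hcoef : 0 ≤ ρ ^ 4 / (1 - ρ ^ 2) := div_nonneg (by positivity) (by nlinarith)
  exact mul_le_mul_of_nonneg_left
    (Real.rpow_le_rpow (le_max_left _ _) hbase (by positivity)) hcoef
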